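/- arXiv:2503.17888 — 2 statements merged into one kernel-verified Lean document; each statement's English description precedes it below -/
import Mathlib

section
/- Let (η_i)_{i∈ℤ} be a strictly stationary sequence of mean-zero real random variables with finite-range dependence of range M, and suppose |η_i| ≤ α almost surely. Then for every even integer exponent 2p and all t > s ≥ 0 integers, E[(Σ_{r=s}^{t} η_r)^{2p}] ≤ C_p (t-s)^p for a constant C_p depending only on p, M, α. -/
/-!
Expanding the power, the moment is the sum of `E[∏ i, η (g i)]` over index tuples
`g : Fin m → [s, t]`. If some index of `g` lies at distance `> M` from all the others,
finite-range dependence makes that factor independent of the rest, and the term vanishes since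
`η` is centred; every other term is at most `α ^ m`. Once sorted, a tuple without isolated
index has a gap `≤ M` next to each of its `m` entries, so at most `m / 2 - 1` of its `m - 1`
gaps exceed `M`. As the tuple is determined by its sorting permutation, its minimum and its
gaps, there are `O((t - s) ^ (m / 2))` such tuples.
-/

open MeasureTheory ProbabilityTheory Finset
open scoped Nat

def NoIsolatedIndex {ι : Type*} (M : ℤ) (g : ι → ℤ) : Prop :=
  ∀ i, ∃ j ≠ i, |g i - g j| ≤ M

instance {ι : Type*} [Fintype ι] [DecidableEq ι] (M : ℤ) (g : ι → ℤ) :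
    Decidable (NoIsolatedIndex M g) := by
  unfold NoIsolatedIndex; infer_instance

lemma NoIsolatedIndex.comp_equiv {ι κ : Type*} {M : ℤ} {g : ι → ℤ} (h : NoIsolatedIndex M g)
    (σ : κ ≃ ι) : NoIsolatedIndex M (g ∘ σ) := by
  intro i
  obtain ⟨j, hji, hj⟩ := h (σ i)
  exact ⟨σ.symm j, by rintro rfl; simp at hji, by simpa using hj⟩

def increments {n : ℕ} (v : Fin (n + 1) → ℤ) (k : Fin n) : ℤ := v k.succ - v k.castSucc

lemma eq_of_apply_zero_eq_of_increments_eq {n : ℕ} {v w : Fin (n + 1) → ℤ} (h0 : v 0 = w 0)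
    (h : increments v = increments w) : v = w := by
  funext i
  induction i using Fin.induction with
  | zero => exact h0
  | succ k ih =>
    have hk := congrFun h k
    simp only [increments] at hk
    linarith

lemma Monotone.increments_nonneg {n : ℕ} {v : Fin (n + 1) → ℤ} (hv : Monotone v) (k : Fin n) :
    0 ≤ increments v k :=
  sub_nonneg.mpr (hv (Fin.castSucc_le_succ k))

lemma Fin.succ_le_two_mul_card_of_forall_adjacent {n : ℕ} (S : Finset (Fin n))
    (hS : ∀ i : Fin (n + 1), ∃ k ∈ S, k.castSucc = i ∨ k.succ = i) : n + 1 ≤ 2 * #S := by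
  choose f hfS hf using hS
  calc n + 1 = #(univ : Finset (Fin (n + 1))) := by simp
    _ ≤ 2 * #(univ.image f) := card_le_mul_card_image _ 2 fun k _ => ?_
    _ ≤ 2 * #S := by
      gcongr
      exact image_subset_iff.mpr fun i _ => hfS i
  calc #{i | f i = k} ≤ #({k.castSucc, k.succ} : Finset _) := by
        refine card_le_card fun i hi => ?_
        obtain ⟨-, rfl⟩ := mem_filter.mp hi
        rcases hf i with h | h <;> simp [h]
    _ ≤ 2 := card_le_two

lemma NoIsolatedIndex.exists_adjacent_increments_le {n : ℕ} {M : ℤ} {v : Fin (n + 1) → ℤ}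
    (h : NoIsolatedIndex M v) (hv : Monotone v) (i : Fin (n + 1)) :
    ∃ k : Fin n, (k.castSucc = i ∨ k.succ = i) ∧ increments v k ≤ M := by
  obtain ⟨j, hji, hj⟩ := h i
  rw [abs_le] at hj
  rcases hji.lt_or_gt with hji | hij
  · obtain ⟨k, rfl⟩ := Fin.exists_succ_eq.mpr (Fin.ne_zero_of_lt hji)
    have : v j ≤ v k.castSucc := hv (Fin.le_castSucc_iff.mpr hji)
    exact ⟨k, Or.inr rfl, by simp only [increments]; linarith⟩
  · obtain ⟨k, rfl⟩ := Fin.exists_castSucc_eq.mpr (Fin.ne_last_of_lt hij)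
    have : v k.succ ≤ v j := hv (Fin.castSucc_lt_iff_succ_le.mp hij)
    exact ⟨k, Or.inl rfl, by simp only [increments]; linarith⟩

lemma NoIsolatedIndex.two_mul_card_increments_gt_lt {n : ℕ} {M : ℤ} {v : Fin (n + 1) → ℤ}
    (h : NoIsolatedIndex M v) (hv : Monotone v) : 2 * #{k | M < increments v k} < n := by
  have hsmall := Fin.succ_le_two_mul_card_of_forall_adjacent {k | increments v k ≤ M} fun i => by
    obtain ⟨k, hk, hkM⟩ := h.exists_adjacent_increments_le hv i
    exact ⟨k, by simpa using hkM, hk⟩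
  have hsplit := card_filter_add_card_filter_not (s := univ) fun k : Fin n => increments v k ≤ M
  simp only [not_le, card_univ, Fintype.card_fin] at hsplit
  omega

lemma card_filter_card_notMem_le {ι α : Type*} [Fintype ι] [DecidableEq ι] [DecidableEq α]
    {I J : Finset α} (hI : I.Nonempty) (hJ : J.Nonempty) (r : ℕ) :
    #{d ∈ Fintype.piFinset fun _ : ι => I | #{k | d k ∉ J} ≤ r}
      ≤ 2 ^ Fintype.card ι * (#J ^ Fintype.card ι * #I ^ r) := by
  have hsub : {d ∈ Fintype.piFinset fun _ : ι => I | #{k | d k ∉ J} ≤ r} ⊆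
      (univ.filter fun B : Finset ι => #B ≤ r).biUnion
        fun B => Fintype.piFinset fun k => if k ∈ B then I else J := by
    intro d hd
    simp only [mem_filter, Fintype.mem_piFinset] at hd
    simp only [mem_biUnion, mem_filter, mem_univ, true_and, Fintype.mem_piFinset]
    refine ⟨univ.filter fun k => d k ∉ J, hd.2, fun k => ?_⟩
    split_ifs with hk
    · exact hd.1 k
    · simpa using hk
  have hB : ∀ B : Finset ι, #B ≤ r →
      #(Fintype.piFinset fun k => if k ∈ B then I else J) ≤ #J ^ Fintype.card ι * #I ^ r := by
    intro B hB
    rw [Fintype.card_piFinset]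
    simp only [apply_ite card, prod_ite, prod_const, filter_mem_eq_inter, univ_inter]
    rw [mul_comm]
    gcongr
    · exact one_le_card.mpr hJ
    · exact card_le_univ _
    · exact one_le_card.mpr hI
  calc _ ≤ _ := card_le_card hsub
    _ ≤ _ := card_biUnion_le
    _ ≤ ∑ _B ∈ univ.filter fun B : Finset ι => #B ≤ r, #J ^ Fintype.card ι * #I ^ r :=
      sum_le_sum fun B hB' => hB B (mem_filter.mp hB').2
    _ ≤ _ := by
      rw [sum_const, smul_eq_mul]
      gcongr
      exact (card_filter_le _ _).trans (by simp)

lemma card_monotone_noIsolatedIndex_le (n M : ℕ) {s t : ℤ} (hst : s ≤ t) :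
    #{v ∈ Fintype.piFinset fun _ : Fin (n + 1) => Icc s t | Monotone v ∧ NoIsolatedIndex M v}
      ≤ 2 ^ n * (M + 1) ^ n * #(Icc s t) ^ ((n + 1) / 2) := by
  rcases n.eq_zero_or_pos with rfl | hn
  · refine (card_eq_zero.mpr (filter_eq_empty_iff.mpr fun v _ hv => ?_)).trans_le (Nat.zero_le _)
    obtain ⟨j, hj, -⟩ := hv.2 0
    exact hj (Subsingleton.elim (α := Fin 1) _ _)
  set D := {d ∈ Fintype.piFinset fun _ : Fin n => Icc 0 (t - s) |
    #{k | d k ∉ Icc (0 : ℤ) M} ≤ (n + 1) / 2 - 1}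
  have hcard : #(Icc 0 (t - s)) = #(Icc s t) := by simp only [Int.card_Icc]; congr 1; ring
  calc _ ≤ #(Icc s t ×ˢ D) := card_le_card_of_injOn (fun v => (v 0, increments v)) ?_ ?_
    _ ≤ #(Icc s t) * (2 ^ n * ((M + 1) ^ n * #(Icc s t) ^ ((n + 1) / 2 - 1))) := by
      rw [card_product]
      refine Nat.mul_le_mul_left _ ((card_filter_card_notMem_le (ι := Fin n)
        (nonempty_Icc.mpr (sub_nonneg.mpr hst)) (nonempty_Icc.mpr (Nat.cast_nonneg M))
        ((n + 1) / 2 - 1)).trans_eq ?_)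
      simp [hcard]
    _ = _ := by
      rw [← mul_pow_sub_one (show (n + 1) / 2 ≠ 0 by omega) #(Icc s t)]
      ring
  · intro v hv
    simp only [coe_filter, Fintype.mem_piFinset, mem_Icc, Set.mem_ofPred_eq] at hv
    obtain ⟨hvI, hmono, hiso⟩ := hv
    simp only [coe_product, Set.mem_prod, mem_coe, D, mem_filter, Fintype.mem_piFinset]
    refine ⟨mem_Icc.mpr (hvI 0), fun k => mem_Icc.mpr ?_, ?_⟩
    · have := hvI k.succ
      have := hvI k.castSucc
      exact ⟨hmono.increments_nonneg k, by simp only [increments]; linarith⟩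
    · have hgaps := hiso.two_mul_card_increments_gt_lt hmono
      calc #{k | increments v k ∉ Icc (0 : ℤ) M} ≤ #{k | (M : ℤ) < increments v k} :=
            card_le_card fun k => ?_
        _ ≤ (n + 1) / 2 - 1 := by omega
      simp only [mem_filter, mem_univ, true_and, mem_Icc, not_and_or, not_le]
      exact fun h => h.resolve_left (hmono.increments_nonneg k).not_gt
  · intro v _ w _ hvw
    exact eq_of_apply_zero_eq_of_increments_eq (Prod.mk.inj hvw).1 (Prod.mk.inj hvw).2

lemma card_noIsolatedIndex_le (n M : ℕ) {s t : ℤ} (hst : s ≤ t) :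
    #{g ∈ Fintype.piFinset fun _ : Fin (n + 1) => Icc s t | NoIsolatedIndex M g}
      ≤ (n + 1)! * (2 ^ n * (M + 1) ^ n * #(Icc s t) ^ ((n + 1) / 2)) := by
  set S := {v ∈ Fintype.piFinset fun _ : Fin (n + 1) => Icc s t | Monotone v ∧ NoIsolatedIndex M v}
  have hsub : {g ∈ Fintype.piFinset fun _ : Fin (n + 1) => Icc s t | NoIsolatedIndex M g} ⊆
      (univ ×ˢ S).image fun σv : Equiv.Perm (Fin (n + 1)) × _ => σv.2 ∘ σv.1.symm := by
    intro g hg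
    simp only [mem_filter, Fintype.mem_piFinset] at hg
    refine mem_image.mpr ⟨(Tuple.sort g, g ∘ Tuple.sort g), ?_, ?_⟩
    · simp [S, hg.1, Tuple.monotone_sort, hg.2.comp_equiv]
    · ext; simp
  calc _ ≤ _ := card_le_card hsub
    _ ≤ #(univ ×ˢ S) := card_image_le
    _ = (n + 1)! * #S := by simp [card_product, Fintype.card_perm]
    _ ≤ _ := by gcongr; exact card_monotone_noIsolatedIndex_le n M hst

section Moments

variable {Ω : Type*} [MeasurableSpace Ω]

def FiniteRangeDependent (η : ℤ → Ω → ℝ) (M : ℕ) (μ : Measure Ω) : Prop :=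
  ∀ A B : Set ℤ, (∀ i ∈ A, ∀ j ∈ B, (M : ℤ) < |i - j|) →
    Indep (⨆ i ∈ A, MeasurableSpace.comap (η i) inferInstance)
      (⨆ j ∈ B, MeasurableSpace.comap (η j) inferInstance) μ

variable {μ : Measure Ω}

lemma nonneg_of_ae_abs_le [NeZero μ] {f : Ω → ℝ} {α : ℝ} (h : ∀ᵐ ω ∂μ, |f ω| ≤ α) : 0 ≤ α :=
  let ⟨_, hω⟩ := h.exists
  (abs_nonneg _).trans hω

lemma ae_abs_prod_le {ι : Type*} {X : ι → Ω → ℝ} {α : ℝ} (hbdd : ∀ i, ∀ᵐ ω ∂μ, |X i ω| ≤ α)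
    (s : Finset ι) : ∀ᵐ ω ∂μ, |∏ i ∈ s, X i ω| ≤ α ^ #s := by
  filter_upwards [(Filter.eventually_all_finset s).mpr fun i _ => hbdd i] with ω hω
  rw [abs_prod, ← prod_const]
  exact prod_le_prod (fun _ _ => abs_nonneg _) hω

lemma integrable_prod_of_ae_abs_le [IsFiniteMeasure μ] {ι : Type*} {X : ι → Ω → ℝ} {α : ℝ}
    (hX : ∀ i, Measurable (X i)) (hbdd : ∀ i, ∀ᵐ ω ∂μ, |X i ω| ≤ α) (s : Finset ι) :
    Integrable (fun ω => ∏ i ∈ s, X i ω) μ :=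
  .of_bound (measurable_prod s fun i _ => hX i).aestronglyMeasurable (α ^ #s)
    (ae_abs_prod_le hbdd s)

lemma abs_integral_prod_le [IsProbabilityMeasure μ] {ι : Type*} {X : ι → Ω → ℝ} {α : ℝ}
    (hbdd : ∀ i, ∀ᵐ ω ∂μ, |X i ω| ≤ α) (s : Finset ι) :
    |∫ ω, ∏ i ∈ s, X i ω ∂μ| ≤ α ^ #s := by
  have h := norm_integral_le_of_norm_le_const (f := fun ω => ∏ i ∈ s, X i ω)
    (by simpa only [Real.norm_eq_abs] using ae_abs_prod_le hbdd s)
  rwa [probReal_univ, mul_one, Real.norm_eq_abs] at h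

lemma integral_prod_eq_zero_of_isolated {η : ℤ → Ω → ℝ} {M : ℕ}
    (hmeas : ∀ i, Measurable (η i)) (hmean : ∀ i, ∫ ω, η i ω ∂μ = 0)
    (hdep : FiniteRangeDependent η M μ) {ι : Type*} [Fintype ι] [DecidableEq ι] (g : ι → ℤ)
    (i : ι) (hi : ∀ j ≠ i, (M : ℤ) < |g i - g j|) : ∫ ω, ∏ j, η (g j) ω ∂μ = 0 := by
  have hrest : Measurable fun ω => ∏ j ∈ univ.erase i, η (g j) ω :=
    measurable_prod _ fun j _ => hmeas (g j)
  have hindep : IndepFun (η (g i)) (fun ω => ∏ j ∈ univ.erase i, η (g j) ω) μ := by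
    rw [IndepFun_iff_Indep]
    refine indep_of_indep_of_le_right (indep_of_indep_of_le_left
      (hdep {g i} {x | ∃ j ≠ i, g j = x} ?_) ?_) ?_
    · rintro a rfl b ⟨j, hj, rfl⟩
      exact hi j hj
    · exact le_biSup (fun a => MeasurableSpace.comap (η a) inferInstance) (Set.mem_singleton (g i))
    · refine Measurable.comap_le (measurable_prod _ fun j hj => Measurable.of_comap_le ?_)
      exact le_biSup (fun b => MeasurableSpace.comap (η b) inferInstance)
        ⟨j, (mem_erase.mp hj).1, rfl⟩
  simp_rw [← mul_prod_erase univ (fun j => η (g j) _) (mem_univ i)]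
  rw [hindep.integral_fun_mul_eq_mul_integral (hmeas _).aestronglyMeasurable
    hrest.aestronglyMeasurable, hmean, zero_mul]

lemma integral_sum_pow_le [IsProbabilityMeasure μ] {η : ℤ → Ω → ℝ} {M : ℕ} {α : ℝ}
    (hmeas : ∀ i, Measurable (η i)) (hbdd : ∀ i, ∀ᵐ ω ∂μ, |η i ω| ≤ α)
    (hmean : ∀ i, ∫ ω, η i ω ∂μ = 0) (hdep : FiniteRangeDependent η M μ)
    (n : ℕ) {s t : ℤ} (hst : s ≤ t) :
    ∫ ω, (∑ r ∈ Icc s t, η r ω) ^ (n + 1) ∂μ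
      ≤ (n + 1)! * (2 ^ n * (M + 1) ^ n * #(Icc s t) ^ ((n + 1) / 2)) * α ^ (n + 1) := by
  set T := Fintype.piFinset fun _ : Fin (n + 1) => Icc s t
  calc ∫ ω, (∑ r ∈ Icc s t, η r ω) ^ (n + 1) ∂μ = ∑ g ∈ T, ∫ ω, ∏ i, η (g i) ω ∂μ := by
        simp_rw [sum_pow']
        exact integral_finsetSum _ fun g _ =>
          integrable_prod_of_ae_abs_le (fun i => hmeas (g i)) (fun i => hbdd (g i)) _
    _ = ∑ g ∈ T with NoIsolatedIndex M g, ∫ ω, ∏ i, η (g i) ω ∂μ := by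
        refine (sum_filter_of_ne fun g _ hg i => ?_).symm
        by_contra! hi
        exact hg (integral_prod_eq_zero_of_isolated hmeas hmean hdep g i hi)
    _ ≤ ∑ g ∈ T with NoIsolatedIndex M g, α ^ (n + 1) := by
        refine sum_le_sum fun g _ => (le_abs_self _).trans ?_
        simpa using abs_integral_prod_le (fun i => hbdd (g i)) univ
    _ = #{g ∈ T | NoIsolatedIndex M g} * α ^ (n + 1) := by rw [sum_const, nsmul_eq_mul]
    _ ≤ _ := by
        gcongr
        · exact pow_nonneg (nonneg_of_ae_abs_le (hbdd 0)) _
        · exact_mod_cast card_noIsolatedIndex_le n M hst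

end Moments

theorem stmt1_general {Ω : Type*} [MeasureSpace Ω] [IsProbabilityMeasure (ℙ : Measure Ω)]
    (η : ℤ → Ω → ℝ) (M : ℕ) (α : ℝ)
    (hmeas : ∀ i, Measurable (η i))
    (hbdd : ∀ i, ∀ᵐ ω ∂ℙ, |η i ω| ≤ α)
    (hmean : ∀ i, ∫ ω, η i ω ∂ℙ = 0)
    (hindep : ∀ A B : Set ℤ, (∀ i ∈ A, ∀ j ∈ B, (M : ℤ) < |i - j|) →
      Indep (⨆ i ∈ A, MeasurableSpace.comap (η i) inferInstance)
            (⨆ j ∈ B, MeasurableSpace.comap (η j) inferInstance) ℙ) :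
    ∀ p : ℕ, ∃ C : ℝ, ∀ s t : ℕ, s < t →
      ∫ ω, (∑ r ∈ Finset.Icc (s : ℤ) (t : ℤ), η r ω) ^ (2 * p) ∂ℙ
        ≤ C * ((t : ℝ) - (s : ℝ)) ^ p := by
  rintro (_ | p)
  · exact ⟨1, fun s t _ => by simp⟩
  refine ⟨(2 * p + 2)! * (2 ^ (2 * p + 1) * (M + 1) ^ (2 * p + 1) * 2 ^ (p + 1)) * α ^ (2 * p + 2),
    fun s t hst => ?_⟩
  have hlen : (#(Icc (s : ℤ) t) : ℝ) ≤ 2 * ((t : ℝ) - s) := by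
    have : #(Icc (s : ℤ) t) = t + 1 - s := by simp only [Int.card_Icc]; omega
    rw [this, Nat.cast_sub (by omega)]
    have : (s : ℝ) + 1 ≤ t := by exact_mod_cast hst
    push_cast
    linarith
  have hα := pow_nonneg (nonneg_of_ae_abs_le (hbdd 0)) (2 * p + 2)
  calc ∫ ω, (∑ r ∈ Icc (s : ℤ) t, η r ω) ^ (2 * (p + 1)) ∂ℙ
      ≤ (2 * p + 1 + 1)! * (2 ^ (2 * p + 1) * (M + 1) ^ (2 * p + 1) *
          #(Icc (s : ℤ) t) ^ ((2 * p + 1 + 1) / 2)) * α ^ (2 * p + 1 + 1) :=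
        integral_sum_pow_le hmeas hbdd hmean hindep (2 * p + 1) (by omega)
    _ ≤ (2 * p + 2)! * (2 ^ (2 * p + 1) * (M + 1) ^ (2 * p + 1) *
          (2 * ((t : ℝ) - s)) ^ (p + 1)) * α ^ (2 * p + 2) := by
        rw [show (2 * p + 1 + 1) / 2 = p + 1 by omega]
        gcongr
    _ = _ := by rw [mul_pow]; ring

/-- For a strictly stationary, mean-zero, a.s.-bounded sequence with
finite-range dependence of range `M` (independence of σ-algebras over index sets at
distance `> M`), every even moment of a partial sum over `[s,t]` is `≤ C_p (t-s)^p`. -/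
theorem stmt1 {Ω : Type*} [MeasureSpace Ω] [IsProbabilityMeasure (ℙ : Measure Ω)]
    (η : ℤ → Ω → ℝ) (M : ℕ) (α : ℝ)
    (hmeas : ∀ i, Measurable (η i))
    (hstat : ∀ k : ℤ, Measure.map (fun ω (i : ℤ) => η (i + k) ω) ℙ
      = Measure.map (fun ω (i : ℤ) => η i ω) ℙ)
    (hbdd : ∀ i, ∀ᵐ ω ∂ℙ, |η i ω| ≤ α)
    (hmean : ∀ i, ∫ ω, η i ω ∂ℙ = 0)
    (hindep : ∀ A B : Set ℤ, (∀ i ∈ A, ∀ j ∈ B, (M : ℤ) < |i - j|) →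
      Indep (⨆ i ∈ A, MeasurableSpace.comap (η i) inferInstance)
            (⨆ j ∈ B, MeasurableSpace.comap (η j) inferInstance) ℙ) :
    ∀ p : ℕ, ∃ C : ℝ, ∀ s t : ℕ, s < t →
      ∫ ω, (∑ r ∈ Finset.Icc (s : ℤ) (t : ℤ), η r ω) ^ (2 * p) ∂ℙ
        ≤ C * ((t : ℝ) - (s : ℝ)) ^ p :=
  stmt1_general η M α hmeas hbdd hmean hindep
end

section
/- Let (M_t)_{t≥0} and (L_t)_{t≥0} be continuous adapted real-valued processes on a filtered probability space, both nondecreasing with M_0 = L_0 = 0, and suppose that M - L is a martingale. Then M_t = L_t for all t almost surely. -/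
/-!
Put `X = M - L` and `V = M + L`, so that `|X u - X s| ≤ V u - V s` for `s ≤ u`. Fix `t` and sample
both processes on the uniform grid of mesh `t / n`. Discarding the increments of `X` from the moment
`V` reaches a level `K` on gives a bounded path `P` with `P n = X t` on `{V t < K}`. Expanding
`(P n)² = Σ (ΔP)² + 2 Σ P ΔP`, every cross term is a martingale increment with mean zero except at
the single step where `V` crosses `K`, while `Σ (ΔP)² ≤ K · max |ΔX|`, which tends to `0` by
continuity of the paths. The crossing step is controlled by truncating at a level `Q` and using that
`|X|` is a submartingale. Letting `n → ∞` and then `Q → ∞` gives `E[X t² ; V t < K] = 0`.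
-/

open MeasureTheory Filter Topology Finset
open scoped NNReal

noncomputable def maxIncr (y : ℕ → ℝ) : ℕ → ℝ
  | 0 => 0
  | n + 1 => max (maxIncr y n) |y (n + 1) - y n|

lemma maxIncr_nonneg (y : ℕ → ℝ) (n : ℕ) : 0 ≤ maxIncr y n := by
  induction n with
  | zero => rfl
  | succ n ih => exact ih.trans (le_max_left _ _)

lemma abs_sub_le_maxIncr (y : ℕ → ℝ) {k n : ℕ} (h : k < n) :
    |y (k + 1) - y k| ≤ maxIncr y n := by
  induction n with
  | zero => omega
  | succ n ih =>
    rcases Nat.lt_succ_iff_lt_or_eq.1 h with h | rfl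
    · exact (ih h).trans (le_max_left _ _)
    · exact le_max_right _ _

lemma maxIncr_le {y : ℕ → ℝ} {n : ℕ} {c : ℝ} (hc : 0 ≤ c)
    (h : ∀ k < n, |y (k + 1) - y k| ≤ c) : maxIncr y n ≤ c := by
  induction n with
  | zero => exact hc
  | succ n ih => exact max_le (ih fun k hk => h k (hk.trans n.lt_succ_self)) (h n n.lt_succ_self)

lemma measurable_maxIncr {Ω : Type*} [MeasurableSpace Ω] {Y : ℕ → Ω → ℝ}
    (hY : ∀ k, Measurable (Y k)) (n : ℕ) : Measurable fun ω => maxIncr (fun k => Y k ω) n := by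
  induction n with
  | zero => exact measurable_const
  | succ n ih => exact ih.max ((hY (n + 1)).sub (hY n)).abs

noncomputable def stoppedBelow (y a : ℕ → ℝ) (K : ℝ) (j : ℕ) : ℝ :=
  ∑ k ∈ range j, if a (k + 1) < K then y (k + 1) - y k else 0

section Paths

variable {y a : ℕ → ℝ} {K : ℝ}

lemma stoppedBelow_succ (j : ℕ) : stoppedBelow y a K (j + 1) =
    stoppedBelow y a K j + if a (j + 1) < K then y (j + 1) - y j else 0 :=
  sum_range_succ _ _

lemma sq_stoppedBelow (n : ℕ) : stoppedBelow y a K n ^ 2 = ∑ j ∈ range n,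
    ((if a (j + 1) < K then y (j + 1) - y j else 0) ^ 2 +
      2 * (stoppedBelow y a K j * if a (j + 1) < K then y (j + 1) - y j else 0)) := by
  induction n with
  | zero => simp [stoppedBelow]
  | succ n ih => rw [stoppedBelow_succ, sum_range_succ, ← ih]; ring

lemma sum_ite_crossing_le (ha : Monotone a) {c : ℝ} (hc : 0 ≤ c) (n : ℕ) :
    ∑ j ∈ range n, (if a j < K ∧ K ≤ a (j + 1) then c else 0) ≤ if a n < K then 0 else c := by
  induction n with
  | zero => split_ifs <;> simp [hc]
  | succ n ih =>
    rw [sum_range_succ]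
    by_cases hn1 : a (n + 1) < K
    · have hn : a n < K := (ha n.le_succ).trans_lt hn1
      simp only [hn, hn1, if_true, not_le.2 hn1, and_false, if_false] at ih ⊢
      linarith
    · by_cases hn : a n < K
      · simp only [hn, hn1, if_true, not_lt.1 hn1, and_self, if_false] at ih ⊢
        linarith
      · simp only [hn, hn1, false_and, if_false] at ih ⊢
        linarith

lemma sum_ite_crossing_above_le (ha : Monotone a) {c : ℝ} (hc : 0 ≤ c) (Q : ℝ) (n : ℕ) :
    ∑ j ∈ range n, (if a j < K ∧ K ≤ a (j + 1) ∧ Q < a (j + 1) then c else 0) ≤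
      if Q < a n then c else 0 := by
  split_ifs with hQ
  · calc ∑ j ∈ range n, (if a j < K ∧ K ≤ a (j + 1) ∧ Q < a (j + 1) then c else 0)
        ≤ ∑ j ∈ range n, (if a j < K ∧ K ≤ a (j + 1) then c else 0) :=
          sum_le_sum fun j _ => by split_ifs <;> simp_all
      _ ≤ c := (sum_ite_crossing_le ha hc n).trans (by split_ifs <;> simp [hc])
  · refine (sum_eq_zero fun j hj => if_neg fun hj' => hQ ?_).le
    exact hj'.2.2.trans_le (ha (mem_range.1 hj))

def IncrementsDominated (y a : ℕ → ℝ) : Prop :=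
  y 0 = 0 ∧ a 0 = 0 ∧ ∀ k, |y (k + 1) - y k| ≤ a (k + 1) - a k

namespace IncrementsDominated

lemma monotone (h : IncrementsDominated y a) : Monotone a :=
  monotone_nat_of_le_succ fun k => by linarith [abs_nonneg (y (k + 1) - y k), h.2.2 k]

lemma abs_le (h : IncrementsDominated y a) (k : ℕ) : |y k| ≤ a k := by
  induction k with
  | zero => simp [h.1, h.2.1]
  | succ k ih => linarith [abs_sub_abs_le_abs_sub (y (k + 1)) (y k), h.2.2 k]

lemma nonneg (h : IncrementsDominated y a) (k : ℕ) : 0 ≤ a k :=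
  (abs_nonneg _).trans (h.abs_le k)

lemma stoppedBelow_eq_of_lt (h : IncrementsDominated y a) {j : ℕ} (hj : a j < K) :
    stoppedBelow y a K j = y j := by
  rw [stoppedBelow, sum_congr rfl fun k hk => if_pos ((h.monotone (mem_range.1 hk)).trans_lt hj),
    sum_range_sub (fun k => y k), h.1, sub_zero]

lemma abs_ite_sub_le (h : IncrementsDominated y a) (k : ℕ) :
    |if a (k + 1) < K then y (k + 1) - y k else 0| ≤
      if a (k + 1) < K then a (k + 1) - a k else 0 := by
  split_ifs
  · exact h.2.2 k
  · simp

lemma sum_ite_sub_le (h : IncrementsDominated y a) (hK : 0 ≤ K) (j : ℕ) :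
    ∑ k ∈ range j, (if a (k + 1) < K then a (k + 1) - a k else 0) ≤ min (a j) K := by
  induction j with
  | zero => simp [h.2.1, hK]
  | succ j ih =>
    rw [sum_range_succ]
    split_ifs with hj
    · rw [min_eq_left hj.le]; linarith [min_le_left (a j) K]
    · linarith [min_le_min_right K (h.monotone j.le_succ)]

lemma abs_stoppedBelow_le (h : IncrementsDominated y a) (hK : 0 ≤ K) (j : ℕ) :
    |stoppedBelow y a K j| ≤ K :=
  calc |stoppedBelow y a K j|
      ≤ ∑ k ∈ range j, |if a (k + 1) < K then y (k + 1) - y k else 0| := abs_sum_le_sum_abs _ _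
    _ ≤ ∑ k ∈ range j, (if a (k + 1) < K then a (k + 1) - a k else 0) :=
        sum_le_sum fun k _ => h.abs_ite_sub_le k
    _ ≤ K := (h.sum_ite_sub_le hK j).trans (min_le_right _ _)

lemma abs_ite_stoppedBelow_le (h : IncrementsDominated y a) (hK : 0 ≤ K) (j : ℕ) :
    |if a j < K then stoppedBelow y a K j else 0| ≤ K := by
  split_ifs
  · exact h.abs_stoppedBelow_le hK j
  · simpa using hK

lemma sum_sq_ite_sub_le (h : IncrementsDominated y a) (hK : 0 ≤ K) (n : ℕ) :
    ∑ k ∈ range n, (if a (k + 1) < K then y (k + 1) - y k else 0) ^ 2 ≤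
      K * min K (maxIncr y n) := by
  have hmin : 0 ≤ min K (maxIncr y n) := le_min hK (maxIncr_nonneg y n)
  calc ∑ k ∈ range n, (if a (k + 1) < K then y (k + 1) - y k else 0) ^ 2
      ≤ ∑ k ∈ range n, min K (maxIncr y n) * (if a (k + 1) < K then a (k + 1) - a k else 0) := by
        refine sum_le_sum fun k hk => ?_
        rw [← sq_abs, sq]
        refine mul_le_mul ?_ (h.abs_ite_sub_le k) (abs_nonneg _) hmin
        split_ifs with hk'
        · exact le_min (by linarith [h.2.2 k, h.nonneg k])
            (abs_sub_le_maxIncr y (mem_range.1 hk))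
        · simpa using hmin
    _ = min K (maxIncr y n) * ∑ k ∈ range n, (if a (k + 1) < K then a (k + 1) - a k else 0) :=
        (mul_sum _ _ _).symm
    _ ≤ K * min K (maxIncr y n) := by
        rw [mul_comm K]
        exact mul_le_mul_of_nonneg_left ((h.sum_ite_sub_le hK n).trans (min_le_right _ _)) hmin

lemma stoppedBelow_mul_le (h : IncrementsDominated y a) (j : ℕ) :
    stoppedBelow y a K j * (if a (j + 1) < K then y (j + 1) - y j else 0) ≤
      (if a j < K then stoppedBelow y a K j else 0) * (y (j + 1) - y j) +
        K * if a j < K ∧ K ≤ a (j + 1) then |y (j + 1) - y j| else 0 := by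
  by_cases hj1 : a (j + 1) < K
  · have hj : a j < K := (h.monotone j.le_succ).trans_lt hj1
    simp [hj1, hj, not_le.2 hj1]
  by_cases hj : a j < K
  · rw [if_neg hj1, if_pos hj, if_pos ⟨hj, not_lt.1 hj1⟩, h.stoppedBelow_eq_of_lt hj, mul_zero]
    have : |y j * (y (j + 1) - y j)| ≤ K * |y (j + 1) - y j| := by
      rw [abs_mul]
      exact mul_le_mul_of_nonneg_right ((h.abs_le j).trans hj.le) (abs_nonneg _)
    linarith [neg_abs_le (y j * (y (j + 1) - y j))]
  · simp [hj1, hj]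

/-- Pathwise form of `E[Y_n²] = Σ E[(ΔY)²]` for the path stopped below level `K`: the middle
sum is a martingale transform, and the last sum only sees the step on which `a` crosses `K`. -/
lemma ite_sq_le (h : IncrementsDominated y a) (hK : 0 ≤ K) (n : ℕ) :
    (if a n < K then y n ^ 2 else 0) ≤ K * min K (maxIncr y n) +
      2 * ∑ j ∈ range n, (if a j < K then stoppedBelow y a K j else 0) * (y (j + 1) - y j) +
      2 * K * ∑ j ∈ range n, if a j < K ∧ K ≤ a (j + 1) then |y (j + 1) - y j| else 0 := by
  have hstop : (if a n < K then y n ^ 2 else 0) ≤ stoppedBelow y a K n ^ 2 := by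
    split_ifs with hn
    · rw [h.stoppedBelow_eq_of_lt hn]
    · exact sq_nonneg _
  have hcross := sum_le_sum fun j (_ : j ∈ range n) => h.stoppedBelow_mul_le (K := K) j
  rw [sum_add_distrib, ← mul_sum] at hcross
  rw [sq_stoppedBelow, sum_add_distrib, ← mul_sum] at hstop
  linarith [h.sum_sq_ite_sub_le hK n]

lemma sum_ite_crossing_abs_sub_le (h : IncrementsDominated y a) {Q : ℝ} (hQ : 0 ≤ Q) (n : ℕ) :
    ∑ j ∈ range n, (if a j < K ∧ K ≤ a (j + 1) then |y (j + 1) - y j| else 0) ≤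
      min Q (maxIncr y n) +
        ∑ j ∈ range n, if a j < K ∧ K ≤ a (j + 1) ∧ Q < a (j + 1) then K + |y (j + 1)| else 0 := by
  have hmin : 0 ≤ min Q (maxIncr y n) := le_min hQ (maxIncr_nonneg y n)
  calc ∑ j ∈ range n, (if a j < K ∧ K ≤ a (j + 1) then |y (j + 1) - y j| else 0)
      ≤ ∑ j ∈ range n, ((if a j < K ∧ K ≤ a (j + 1) then min Q (maxIncr y n) else 0) +
          if a j < K ∧ K ≤ a (j + 1) ∧ Q < a (j + 1) then K + |y (j + 1)| else 0) := by
        refine sum_le_sum fun j hj => ?_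
        by_cases hE : a j < K ∧ K ≤ a (j + 1)
        · by_cases hQj : Q < a (j + 1)
          · rw [if_pos hE, if_pos hE, if_pos ⟨hE.1, hE.2, hQj⟩]
            linarith [abs_sub (y (j + 1)) (y j), h.abs_le j]
          · rw [if_pos hE, if_pos hE, if_neg fun h' => hQj h'.2.2, add_zero]
            refine le_min ?_ (abs_sub_le_maxIncr y (mem_range.1 hj))
            linarith [h.2.2 j, h.nonneg j]
        · rw [if_neg hE, if_neg hE, if_neg fun h' => hE ⟨h'.1, h'.2.1⟩, add_zero]
    _ ≤ _ := by
        rw [sum_add_distrib]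
        gcongr
        exact (sum_ite_crossing_le h.monotone hmin n).trans (by split_ifs <;> simp [hmin])

end IncrementsDominated

end Paths

noncomputable def grid (t : ℝ≥0) (n k : ℕ) : ℝ≥0 := k * t / n

section Grid

variable (t : ℝ≥0) {n : ℕ}

lemma grid_zero (n : ℕ) : grid t n 0 = 0 := by simp [grid]

lemma grid_self (hn : 0 < n) : grid t n n = t := by
  rw [grid, mul_div_right_comm, div_self (Nat.cast_ne_zero.2 hn.ne'), one_mul]

lemma grid_mono (n : ℕ) : Monotone (grid t n) := fun a b hab => by
  unfold grid
  gcongr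

lemma grid_le (hn : 0 < n) {k : ℕ} (hk : k ≤ n) : grid t n k ≤ t :=
  (grid_mono t n hk).trans_eq (grid_self t hn)

lemma dist_grid_succ (k : ℕ) : dist (grid t n (k + 1)) (grid t n k) = t / n := by
  rw [NNReal.dist_eq, grid, grid]
  push_cast
  rw [show ((k : ℝ) + 1) * t / n - k * t / n = t / n by ring]
  exact abs_of_nonneg (by positivity)

lemma tendsto_maxIncr_grid {f : ℝ≥0 → ℝ} (hf : Continuous f) :
    Tendsto (fun n => maxIncr (fun k => f (grid t n k)) n) atTop (𝓝 0) := by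
  rw [Metric.tendsto_atTop]
  intro ε hε
  obtain ⟨δ, hδ, hfδ⟩ := Metric.uniformContinuousOn_iff.1
    (isCompact_Icc.uniformContinuousOn_of_continuous hf.continuousOn) (ε / 2) (half_pos hε)
  obtain ⟨N, hN⟩ := exists_nat_gt ((t : ℝ) / δ)
  refine ⟨N + 1, fun n hn => ?_⟩
  have hn0 : 0 < n := by omega
  have hmesh : (t : ℝ) / n < δ := by
    rw [div_lt_iff₀ (by exact_mod_cast hn0)]
    rw [div_lt_iff₀ hδ] at hN
    have : (N : ℝ) ≤ n := by exact_mod_cast (N.le_succ.trans hn)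
    nlinarith
  have hle : maxIncr (fun k => f (grid t n k)) n ≤ ε / 2 := by
    refine maxIncr_le (half_pos hε).le fun k hk => ?_
    rw [← Real.dist_eq]
    exact (hfδ _ ⟨zero_le, grid_le t hn0 hk⟩ _ ⟨zero_le, grid_le t hn0 hk.le⟩
      ((dist_grid_succ t k).trans_lt hmesh)).le
  rw [Real.dist_0_eq_abs, abs_of_nonneg (maxIncr_nonneg _ _)]
  linarith

end Grid

namespace MeasureTheory

section Integration

variable {Ω : Type*} {m : MeasurableSpace Ω} {μ : Measure Ω}

lemma integral_ite_eq_setIntegral {p : Ω → Prop} [DecidablePred p]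
    (hp : MeasurableSet {ω | p ω}) (f : Ω → ℝ) :
    ∫ ω, (if p ω then f ω else 0) ∂μ = ∫ ω in {ω | p ω}, f ω ∂μ := by
  rw [← integral_indicator hp]
  simp only [Set.indicator_apply, Set.mem_ofPred_eq]

lemma Integrable.ite_zero {p : Ω → Prop} [DecidablePred p] {f : Ω → ℝ} (hf : Integrable f μ)
    (hp : MeasurableSet {ω | p ω}) : Integrable (fun ω => if p ω then f ω else 0) μ := by
  refine (hf.indicator hp).congr (.of_forall fun ω => ?_)
  simp only [Set.indicator_apply, Set.mem_ofPred_eq]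

lemma integrable_ite_sq [IsFiniteMeasure μ] {f g : Ω → ℝ} (hf : Measurable f) (hg : Measurable g)
    (hfg : ∀ ω, |f ω| ≤ g ω) (K : ℝ) : Integrable (fun ω => if g ω < K then f ω ^ 2 else 0) μ :=
  .of_bound ((Measurable.ite (measurableSet_lt hg measurable_const) (hf.pow_const 2)
    measurable_const).aestronglyMeasurable) (K ^ 2) <| .of_forall fun ω => by
      rw [Real.norm_eq_abs]
      split_ifs with hK
      · rw [abs_sq, ← sq_abs]
        exact pow_le_pow_left₀ (abs_nonneg _) ((hfg ω).trans hK.le) 2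
      · simp [sq_nonneg]

lemma integrable_min_maxIncr [IsFiniteMeasure μ] {Y : ℕ → Ω → ℝ} (hY : ∀ k, Measurable (Y k))
    {c : ℝ} (hc : 0 ≤ c) (n : ℕ) : Integrable (fun ω => min c (maxIncr (fun k => Y k ω) n)) μ :=
  .of_bound (measurable_const.min (measurable_maxIncr hY n)).aestronglyMeasurable c <|
    .of_forall fun ω => by
      rw [Real.norm_eq_abs, abs_of_nonneg (le_min hc (maxIncr_nonneg _ n))]
      exact min_le_left _ _

lemma tendsto_integral_ite_lt_atTop {f g : Ω → ℝ} (hf : Measurable f) (hg : Integrable g μ) :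
    Tendsto (fun Q : ℝ => ∫ ω, (if Q < f ω then g ω else 0) ∂μ) atTop (𝓝 0) := by
  have hmeas : ∀ Q : ℝ, MeasurableSet {ω | Q < f ω} := fun Q => measurableSet_lt measurable_const hf
  have hlim := tendsto_setIntegral_of_antitone (μ := μ) (f := g) hmeas
    (fun Q Q' hQ ω hω => lt_of_le_of_lt hQ hω) ⟨0, hg.integrableOn⟩
  rw [Set.iInter_eq_empty_iff.2 fun ω => ⟨f ω, (lt_irrefl (f ω) ·)⟩, Measure.restrict_empty,
    integral_zero_measure] at hlim
  simpa only [integral_ite_eq_setIntegral (hmeas _)] using hlim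

lemma ae_forall_eq_of_continuous {T E : Type*} [TopologicalSpace T]
    [TopologicalSpace.SeparableSpace T] [TopologicalSpace E] [T2Space E] {X Y : T → Ω → E}
    (hX : ∀ ω, Continuous fun t => X t ω) (hY : ∀ ω, Continuous fun t => Y t ω)
    (h : ∀ t, X t =ᵐ[μ] Y t) : ∀ᵐ ω ∂μ, ∀ t, X t ω = Y t ω := by
  obtain ⟨s, hs, hsd⟩ := TopologicalSpace.exists_countable_dense T
  filter_upwards [(ae_ball_iff hs).2 fun t _ => h t] with ω hω t
  exact congrFun (Continuous.ext_on hsd (hX ω) (hY ω) fun t ht => hω t ht) t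

end Integration

section Martingale

variable {Ω ι κ : Type*} [Preorder ι] [Preorder κ] {m : MeasurableSpace Ω} {μ : Measure Ω}
  {𝒢 : Filtration ι m} {d : κ → ι} {X : ι → Ω → ℝ} {i j : ι}

def Filtration.comp (𝒢 : Filtration ι m) (hd : Monotone d) : Filtration κ m :=
  ⟨fun k => 𝒢 (d k), fun _ _ hkl => 𝒢.mono (hd hkl), fun k => 𝒢.le (d k)⟩

lemma Adapted.comp (hX : Adapted 𝒢 X) (hd : Monotone d) :
    Adapted (𝒢.comp hd) fun k => X (d k) :=
  fun k => hX (d k)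

lemma Martingale.comp (hX : Martingale X 𝒢 μ) (hd : Monotone d) :
    Martingale (fun k => X (d k)) (𝒢.comp hd) μ :=
  ⟨fun k => hX.stronglyAdapted (d k), fun _ _ hkl => hX.condExp_ae_eq (hd hkl)⟩

lemma Martingale.integral_mul_sub_eq_zero [SigmaFiniteFiltration μ 𝒢] (hX : Martingale X 𝒢 μ)
    (hij : i ≤ j) {H : Ω → ℝ} (hH : StronglyMeasurable[𝒢 i] H) {C : ℝ} (hHC : ∀ ω, |H ω| ≤ C) :
    ∫ ω, H ω * (X j ω - X i ω) ∂μ = 0 := by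
  have hHm : AEStronglyMeasurable H μ := (hH.mono (𝒢.le i)).aestronglyMeasurable
  have hHC' : ∀ᵐ ω ∂μ, ‖H ω‖ ≤ C := .of_forall hHC
  have hHXj := (hX.integrable j).bdd_mul hHm hHC'
  have hHXi := (hX.integrable i).bdd_mul hHm hHC'
  have hpull : μ[fun ω => H ω * X j ω | 𝒢 i] =ᵐ[μ] fun ω => H ω * X i ω := by
    filter_upwards [condExp_mul_of_stronglyMeasurable_left hH hHXj (hX.integrable j),
      hX.condExp_ae_eq hij] with ω h1 h2
    exact h1.trans (by rw [Pi.mul_apply, h2])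
  simp_rw [mul_sub]
  rw [integral_sub hHXj hHXi, ← integral_condExp (𝒢.le i), integral_congr_ae hpull, sub_self]

lemma Martingale.setIntegral_abs_le (hX : Martingale X 𝒢 μ) (hij : i ≤ j) {s : Set Ω}
    (hs : MeasurableSet[𝒢 i] s) : ∫ ω in s, |X i ω| ∂μ ≤ ∫ ω in s, |X j ω| ∂μ :=
  calc ∫ ω in s, |X i ω| ∂μ = ∫ ω in s, |μ[X j | 𝒢 i] ω| ∂μ :=
        setIntegral_congr_ae (𝒢.le i s hs) <| by
          filter_upwards [hX.condExp_ae_eq hij] with ω hω _ using by rw [hω]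
    _ ≤ ∫ ω in s, |X j ω| ∂μ := setIntegral_abs_condExp_le hs _

end Martingale

section Discrete

variable {Ω : Type*} {m : MeasurableSpace Ω} {μ : Measure Ω} {F : Filtration ℕ m}
  {Y A : ℕ → Ω → ℝ} {K : ℝ}

lemma measurable_ite_stoppedBelow (hY : StronglyAdapted F Y) (hA : Adapted F A) (K : ℝ) (j : ℕ) :
    Measurable[F j] fun ω =>
      if A j ω < K then stoppedBelow (fun k => Y k ω) (fun k => A k ω) K j else 0 := by
  refine Measurable.ite (measurableSet_lt (hA j) measurable_const)
    (Finset.measurable_sum _ fun k hk => Measurable.ite ?_ ?_ measurable_const) measurable_const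
  · exact measurableSet_lt ((hA (k + 1)).mono (F.mono (mem_range.1 hk)) le_rfl) measurable_const
  · exact (hY.stronglyMeasurable_le (mem_range.1 hk)).measurable.sub
      (hY.stronglyMeasurable_le (mem_range.1 hk).le).measurable

lemma Martingale.integrable_ite_stoppedBelow_mul_sub (hY : Martingale Y F μ) (hA : Adapted F A)
    (hYA : ∀ ω, IncrementsDominated (fun k => Y k ω) (fun k => A k ω)) (hK : 0 ≤ K) (j : ℕ) :
    Integrable (fun ω =>
      (if A j ω < K then stoppedBelow (fun k => Y k ω) (fun k => A k ω) K j else 0) *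
        (Y (j + 1) ω - Y j ω)) μ :=
  ((hY.integrable (j + 1)).sub (hY.integrable j)).bdd_mul
    ((measurable_ite_stoppedBelow hY.stronglyAdapted hA K j).mono (F.le j)
      le_rfl).aestronglyMeasurable (c := K)
    (.of_forall fun ω => (hYA ω).abs_ite_stoppedBelow_le hK j)

lemma Martingale.integral_ite_stoppedBelow_mul_sub_eq_zero [SigmaFiniteFiltration μ F]
    (hY : Martingale Y F μ) (hA : Adapted F A)
    (hYA : ∀ ω, IncrementsDominated (fun k => Y k ω) (fun k => A k ω)) (hK : 0 ≤ K) (j : ℕ) :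
    ∫ ω, (if A j ω < K then stoppedBelow (fun k => Y k ω) (fun k => A k ω) K j else 0) *
      (Y (j + 1) ω - Y j ω) ∂μ = 0 :=
  hY.integral_mul_sub_eq_zero j.le_succ
    (measurable_ite_stoppedBelow hY.stronglyAdapted hA K j).stronglyMeasurable
    fun ω => (hYA ω).abs_ite_stoppedBelow_le hK j

lemma Martingale.integrable_ite_crossing_abs_sub (hY : Martingale Y F μ) (hA : Adapted F A)
    (j : ℕ) : Integrable (fun ω =>
      if A j ω < K ∧ K ≤ A (j + 1) ω then |Y (j + 1) ω - Y j ω| else 0) μ :=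
  ((hY.integrable (j + 1)).sub (hY.integrable j)).abs.ite_zero
    ((measurableSet_lt ((hA j).mono (F.le j) le_rfl) measurable_const).inter
      (measurableSet_le measurable_const ((hA (j + 1)).mono (F.le _) le_rfl)))

lemma Martingale.integral_sum_ite_crossing_above_le [IsFiniteMeasure μ] (hY : Martingale Y F μ)
    (hA : Adapted F A) (hYA : ∀ ω, IncrementsDominated (fun k => Y k ω) (fun k => A k ω))
    (hK : 0 ≤ K) (Q : ℝ) (n : ℕ) :
    ∫ ω, ∑ j ∈ range n,
        (if A j ω < K ∧ K ≤ A (j + 1) ω ∧ Q < A (j + 1) ω then K + |Y (j + 1) ω| else 0) ∂μ ≤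
      ∫ ω, (if Q < A n ω then K + |Y n ω| else 0) ∂μ := by
  set B : ℕ → Set Ω := fun j => {ω | A j ω < K ∧ K ≤ A (j + 1) ω ∧ Q < A (j + 1) ω}
  have hB : ∀ j, MeasurableSet[F (j + 1)] (B j) := fun j =>
    (measurableSet_lt ((hA j).mono (F.mono j.le_succ) le_rfl) measurable_const).inter
      ((measurableSet_le measurable_const (hA (j + 1))).inter
        (measurableSet_lt measurable_const (hA (j + 1))))
  have hint : ∀ j k, Integrable (fun ω => if ω ∈ B j then K + |Y k ω| else 0) μ := fun j k =>
    ((integrable_const K).add (hY.integrable k).abs).ite_zero (F.le _ _ (hB j))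
  have hsplit : ∀ j k, ∫ ω, (if ω ∈ B j then K + |Y k ω| else 0) ∂μ =
      ∫ ω in B j, K ∂μ + ∫ ω in B j, |Y k ω| ∂μ := fun j k => by
    rw [integral_ite_eq_setIntegral (p := (· ∈ B j)) (F.le _ _ (hB j)),
      integral_add (integrable_const K).integrableOn (hY.integrable k).abs.integrableOn]
    rfl
  calc ∫ ω, ∑ j ∈ range n, (if ω ∈ B j then K + |Y (j + 1) ω| else 0) ∂μ
      = ∑ j ∈ range n, ∫ ω, (if ω ∈ B j then K + |Y (j + 1) ω| else 0) ∂μ :=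
        integral_finsetSum _ fun j _ => hint j (j + 1)
    _ ≤ ∑ j ∈ range n, ∫ ω, (if ω ∈ B j then K + |Y n ω| else 0) ∂μ := by
        refine sum_le_sum fun j hj => ?_
        rw [hsplit, hsplit]
        exact add_le_add_right (hY.setIntegral_abs_le (mem_range.1 hj) (hB j)) _
    _ = ∫ ω, ∑ j ∈ range n, (if ω ∈ B j then K + |Y n ω| else 0) ∂μ :=
        (integral_finsetSum _ fun j _ => hint j n).symm
    _ ≤ ∫ ω, (if Q < A n ω then K + |Y n ω| else 0) ∂μ :=
        integral_mono (integrable_finsetSum _ fun j _ => hint j n)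
          (((integrable_const K).add (hY.integrable n).abs).ite_zero
            (measurableSet_lt measurable_const ((hA n).mono (F.le n) le_rfl)))
          fun ω => sum_ite_crossing_above_le (hYA ω).monotone (by positivity) Q n

lemma Martingale.integral_sum_ite_crossing_abs_sub_le [IsFiniteMeasure μ] (hY : Martingale Y F μ)
    (hA : Adapted F A) (hYA : ∀ ω, IncrementsDominated (fun k => Y k ω) (fun k => A k ω))
    {Q : ℝ} (hK : 0 ≤ K) (hQ : 0 ≤ Q) (n : ℕ) :
    ∫ ω, ∑ j ∈ range n,
        (if A j ω < K ∧ K ≤ A (j + 1) ω then |Y (j + 1) ω - Y j ω| else 0) ∂μ ≤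
      ∫ ω, min Q (maxIncr (fun k => Y k ω) n) ∂μ +
        ∫ ω, (if Q < A n ω then K + |Y n ω| else 0) ∂μ := by
  have hYm : ∀ k, Measurable (Y k) := fun k => ((hY.stronglyAdapted k).mono (F.le k)).measurable
  have hAm : ∀ k, Measurable (A k) := fun k => (hA k).mono (F.le k) le_rfl
  have htail : Integrable (fun ω => ∑ j ∈ range n,
      if A j ω < K ∧ K ≤ A (j + 1) ω ∧ Q < A (j + 1) ω then K + |Y (j + 1) ω| else 0) μ :=
    integrable_finsetSum _ fun j _ =>
      ((integrable_const K).add (hY.integrable (j + 1)).abs).ite_zero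
        ((measurableSet_lt (hAm j) measurable_const).inter
          ((measurableSet_le measurable_const (hAm (j + 1))).inter
            (measurableSet_lt measurable_const (hAm (j + 1)))))
  calc _ ≤ ∫ ω, (min Q (maxIncr (fun k => Y k ω) n) + ∑ j ∈ range n,
        if A j ω < K ∧ K ≤ A (j + 1) ω ∧ Q < A (j + 1) ω then K + |Y (j + 1) ω| else 0) ∂μ :=
        integral_mono (integrable_finsetSum _ fun j _ => hY.integrable_ite_crossing_abs_sub hA j)
          ((integrable_min_maxIncr hYm hQ n).add htail)
          fun ω => (hYA ω).sum_ite_crossing_abs_sub_le hQ n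
    _ ≤ _ := by
        rw [integral_add (integrable_min_maxIncr hYm hQ n) htail]
        exact add_le_add_right (hY.integral_sum_ite_crossing_above_le hA hYA hK Q n) _

theorem Martingale.integral_ite_sq_le [IsFiniteMeasure μ] (hY : Martingale Y F μ)
    (hA : Adapted F A) (hYA : ∀ ω, IncrementsDominated (fun k => Y k ω) (fun k => A k ω))
    {Q : ℝ} (hK : 0 ≤ K) (hQ : 0 ≤ Q) (n : ℕ) :
    ∫ ω, (if A n ω < K then Y n ω ^ 2 else 0) ∂μ ≤
      K * ∫ ω, min K (maxIncr (fun k => Y k ω) n) ∂μ +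
        2 * K * (∫ ω, min Q (maxIncr (fun k => Y k ω) n) ∂μ +
          ∫ ω, (if Q < A n ω then K + |Y n ω| else 0) ∂μ) := by
  have hYm : ∀ k, Measurable (Y k) := fun k => ((hY.stronglyAdapted k).mono (F.le k)).measurable
  have hint₁ : Integrable (fun ω => K * min K (maxIncr (fun k => Y k ω) n)) μ :=
    (integrable_min_maxIncr hYm hK n).const_mul K
  have hint₂ : Integrable (fun ω => 2 * ∑ j ∈ range n,
      (if A j ω < K then stoppedBelow (fun k => Y k ω) (fun k => A k ω) K j else 0) *
        (Y (j + 1) ω - Y j ω)) μ :=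
    (integrable_finsetSum _ fun j _ =>
      hY.integrable_ite_stoppedBelow_mul_sub hA hYA hK j).const_mul 2
  have hint₁₂ : Integrable (fun ω => K * min K (maxIncr (fun k => Y k ω) n) + 2 * ∑ j ∈ range n,
      (if A j ω < K then stoppedBelow (fun k => Y k ω) (fun k => A k ω) K j else 0) *
        (Y (j + 1) ω - Y j ω)) μ := hint₁.add hint₂
  have hint₃ : Integrable (fun ω => 2 * K * ∑ j ∈ range n,
      if A j ω < K ∧ K ≤ A (j + 1) ω then |Y (j + 1) ω - Y j ω| else 0) μ :=
    (integrable_finsetSum _ fun j _ => hY.integrable_ite_crossing_abs_sub hA j).const_mul (2 * K)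
  have hzero : ∫ ω, ∑ j ∈ range n,
      (if A j ω < K then stoppedBelow (fun k => Y k ω) (fun k => A k ω) K j else 0) *
        (Y (j + 1) ω - Y j ω) ∂μ = 0 := by
    rw [integral_finsetSum _ fun j _ => hY.integrable_ite_stoppedBelow_mul_sub hA hYA hK j]
    exact sum_eq_zero fun j _ => hY.integral_ite_stoppedBelow_mul_sub_eq_zero hA hYA hK j
  calc ∫ ω, (if A n ω < K then Y n ω ^ 2 else 0) ∂μ
      ≤ ∫ ω, (K * min K (maxIncr (fun k => Y k ω) n) + 2 * ∑ j ∈ range n,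
          (if A j ω < K then stoppedBelow (fun k => Y k ω) (fun k => A k ω) K j else 0) *
            (Y (j + 1) ω - Y j ω) + 2 * K * ∑ j ∈ range n,
          if A j ω < K ∧ K ≤ A (j + 1) ω then |Y (j + 1) ω - Y j ω| else 0) ∂μ :=
        integral_mono (integrable_ite_sq (hYm n) ((hA n).mono (F.le n) le_rfl)
          (fun ω => (hYA ω).abs_le n) K) (hint₁₂.add hint₃) fun ω => (hYA ω).ite_sq_le hK n
    _ = K * ∫ ω, min K (maxIncr (fun k => Y k ω) n) ∂μ + 2 * K * ∫ ω, ∑ j ∈ range n,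
          (if A j ω < K ∧ K ≤ A (j + 1) ω then |Y (j + 1) ω - Y j ω| else 0) ∂μ := by
        rw [integral_add hint₁₂ hint₃, integral_add hint₁ hint₂, integral_const_mul,
          integral_const_mul, integral_const_mul, hzero, mul_zero, add_zero]
    _ ≤ _ := by
        gcongr
        exact hY.integral_sum_ite_crossing_abs_sub_le hA hYA hK hQ n

end Discrete

section ContinuousTime

variable {Ω : Type*} {m : MeasurableSpace Ω} {μ : Measure Ω} {𝒢 : Filtration ℝ≥0 m}
  {X V : ℝ≥0 → Ω → ℝ}

lemma incrementsDominated_grid (hX0 : ∀ ω, X 0 ω = 0) (hV0 : ∀ ω, V 0 ω = 0)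
    (hXV : ∀ ω {s u}, s ≤ u → |X u ω - X s ω| ≤ V u ω - V s ω) (t : ℝ≥0) (n : ℕ) (ω : Ω) :
    IncrementsDominated (fun k => X (grid t n k) ω) (fun k => V (grid t n k) ω) :=
  ⟨by simp [grid_zero, hX0], by simp [grid_zero, hV0], fun k => hXV ω (grid_mono t n k.le_succ)⟩

lemma tendsto_integral_min_maxIncr_grid [IsFiniteMeasure μ] (hXm : ∀ s, Measurable (X s))
    (hXc : ∀ ω, Continuous fun s => X s ω) (t : ℝ≥0) {c : ℝ} (hc : 0 ≤ c) :
    Tendsto (fun n => ∫ ω, min c (maxIncr (fun k => X (grid t n k) ω) n) ∂μ) atTop (𝓝 0) := by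
  have h := tendsto_integral_of_dominated_convergence (μ := μ) (fun _ => c)
    (fun n => (measurable_const.min (measurable_maxIncr (fun k => hXm _) n)).aestronglyMeasurable)
    (integrable_const c)
    (fun n => .of_forall fun ω => by
      rw [Real.norm_eq_abs, abs_of_nonneg (le_min hc (maxIncr_nonneg _ n))]
      exact min_le_left _ _)
    (.of_forall fun ω => tendsto_const_nhds.min (tendsto_maxIncr_grid t (hXc ω)))
  simpa [min_eq_right hc] using h

lemma Martingale.integral_ite_sq_le_integral_tail [IsFiniteMeasure μ] (hX : Martingale X 𝒢 μ)
    (hV : Adapted 𝒢 V) (hXc : ∀ ω, Continuous fun s => X s ω) (hX0 : ∀ ω, X 0 ω = 0)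
    (hV0 : ∀ ω, V 0 ω = 0) (hXV : ∀ ω {s u}, s ≤ u → |X u ω - X s ω| ≤ V u ω - V s ω)
    (t : ℝ≥0) {K Q : ℝ} (hK : 0 ≤ K) (hQ : 0 ≤ Q) :
    ∫ ω, (if V t ω < K then X t ω ^ 2 else 0) ∂μ ≤
      2 * K * ∫ ω, (if Q < V t ω then K + |X t ω| else 0) ∂μ := by
  have hXm : ∀ s, Measurable (X s) := fun s => ((hX.stronglyAdapted s).mono (𝒢.le s)).measurable
  have hlim := ((tendsto_integral_min_maxIncr_grid (μ := μ) hXm hXc t hK).const_mul K).add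
    (((tendsto_integral_min_maxIncr_grid (μ := μ) hXm hXc t hQ).add_const
      (∫ ω, (if Q < V t ω then K + |X t ω| else 0) ∂μ)).const_mul (2 * K))
  rw [mul_zero, zero_add, zero_add] at hlim
  refine ge_of_tendsto hlim ((eventually_gt_atTop 0).mono fun n hn => ?_)
  simpa only [grid_self t hn] using (hX.comp (grid_mono t n)).integral_ite_sq_le
    (hV.comp (grid_mono t n)) (incrementsDominated_grid hX0 hV0 hXV t n) hK hQ n

theorem Martingale.ae_eq_zero_of_abs_sub_le [IsFiniteMeasure μ] (hX : Martingale X 𝒢 μ)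
    (hV : Adapted 𝒢 V) (hXc : ∀ ω, Continuous fun s => X s ω) (hX0 : ∀ ω, X 0 ω = 0)
    (hV0 : ∀ ω, V 0 ω = 0) (hXV : ∀ ω {s u}, s ≤ u → |X u ω - X s ω| ≤ V u ω - V s ω)
    (t : ℝ≥0) : ∀ᵐ ω ∂μ, X t ω = 0 := by
  have hXm : Measurable (X t) := ((hX.stronglyAdapted t).mono (𝒢.le t)).measurable
  have hVm : Measurable (V t) := (hV t).mono (𝒢.le t) le_rfl
  have habs : ∀ ω, |X t ω| ≤ V t ω := fun ω => by
    simpa [hX0, hV0] using hXV ω (zero_le : (0 : ℝ≥0) ≤ t)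
  have hlevel : ∀ K : ℕ, ∀ᵐ ω ∂μ, V t ω < K → X t ω = 0 := by
    intro K
    have hg : Integrable (fun ω => (K : ℝ) + |X t ω|) μ :=
      (integrable_const _).add (hX.integrable t).abs
    have htail := (tendsto_integral_ite_lt_atTop hVm hg).const_mul (2 * (K : ℝ))
    rw [mul_zero] at htail
    have hle : ∫ ω, (if V t ω < K then X t ω ^ 2 else 0) ∂μ ≤ 0 :=
      ge_of_tendsto htail ((eventually_ge_atTop 0).mono fun Q hQ =>
        hX.integral_ite_sq_le_integral_tail hV hXc hX0 hV0 hXV t K.cast_nonneg hQ)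
    have hnn : 0 ≤ᵐ[μ] fun ω => if V t ω < K then X t ω ^ 2 else 0 :=
      .of_forall fun ω => by positivity
    filter_upwards [(integral_eq_zero_iff_of_nonneg_ae hnn (integrable_ite_sq hXm hVm habs K)).1
      (le_antisymm hle (integral_nonneg_of_ae hnn))] with ω hω hK
    simpa [hK] using hω
  filter_upwards [ae_all_iff.2 hlevel] with ω hω
  obtain ⟨K, hK⟩ := exists_nat_gt (V t ω)
  exact hω K hK

end ContinuousTime

end MeasureTheory

/-- a continuous martingale which is a difference of two continuous
nondecreasing adapted processes starting at `0` is identically `0`; i.e. the two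
processes coincide almost surely. -/
theorem stmt12 {Ω : Type*} {m : MeasurableSpace Ω} {μ : Measure Ω}
    [IsProbabilityMeasure μ] (𝒢 : Filtration ℝ≥0 m)
    (M L : ℝ≥0 → Ω → ℝ)
    (hMc : ∀ ω, Continuous fun t => M t ω) (hLc : ∀ ω, Continuous fun t => L t ω)
    (hMad : Adapted 𝒢 M) (hLad : Adapted 𝒢 L)
    (hMmono : ∀ ω, Monotone fun t => M t ω) (hLmono : ∀ ω, Monotone fun t => L t ω)
    (hM0 : ∀ ω, M 0 ω = 0) (hL0 : ∀ ω, L 0 ω = 0)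
    (hmart : Martingale (fun t ω => M t ω - L t ω) 𝒢 μ) :
    ∀ᵐ ω ∂μ, ∀ t, M t ω = L t ω := by
  have hvar : ∀ ω {s u}, s ≤ u →
      |(M u ω - L u ω) - (M s ω - L s ω)| ≤ (M u ω + L u ω) - (M s ω + L s ω) :=
    fun ω s u hsu => abs_le.2
      ⟨by linarith [hMmono ω hsu, hLmono ω hsu], by linarith [hMmono ω hsu, hLmono ω hsu]⟩
  refine ae_forall_eq_of_continuous hMc hLc fun t => ?_
  filter_upwards [hmart.ae_eq_zero_of_abs_sub_le (V := fun t ω => M t ω + L t ω) (hMad.add hLad)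
    (fun ω => (hMc ω).sub (hLc ω)) (by simp [hM0, hL0]) (by simp [hM0, hL0]) hvar t] with ω hω
  exact sub_eq_zero.1 hω
end
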